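/- arXiv:2411.17739 — 2 statements merged into one kernel-verified Lean document; each statement's English description precedes it below -/
import Mathlib

section
/- In the Young–Fibonacci order, for any word u, the words covering u (i.e., the y > u with no z satisfying u < z < y) are exactly those obtained from u by either (1) replacing the leftmost 1 in u by a 2, or (2) inserting a 1 at any position to the left of the leftmost 1 of u (or anywhere if u contains no 1). -/
inductive YFDigit : Type
  | one : YFDigit
  | two : YFDigit
  deriving DecidableEq, Repr

abbrev YFWord := List YFDigit

namespace YFWord

/-- value of a digit -/
def digitVal : YFDigit → ℕ
  | .one => 1
  | .two => 2

/-- digit sum of a word -/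
def dsum (v : YFWord) : ℕ := (v.map digitVal).sum

/-- number of 2's in a word -/
def twos (v : YFWord) : ℕ := v.count YFDigit.two

/-- longest common prefix of two lists -/
def commonPrefix : YFWord → YFWord → YFWord
  | a :: x, b :: y => if a = b then a :: commonPrefix x y else []
  | _, _ => []

/-- longest common suffix -/
def lcs (x y : YFWord) : YFWord := (commonPrefix x.reverse y.reverse).reverse

/-- the prefix of `x` remaining after deleting the longest common suffix of `x` and `y` -/
def rem (x y : YFWord) : YFWord := x.take (x.length - (lcs x y).length)

/-- the Young–Fibonacci order: x ≤ y iff, after removing the longest common suffix,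
the remaining prefix of `y` has at least as many 2's as the remaining prefix of `x` has digits -/
def yfLE (x y : YFWord) : Prop := (rem x y).length ≤ twos (rem y x)

/-- strict Young–Fibonacci order -/
def yfLT (x y : YFWord) : Prop := yfLE x y ∧ ¬ yfLE y x

/-- `y` covers `x` in the Young–Fibonacci order -/
def covers (x y : YFWord) : Prop := yfLT x y ∧ ∀ z, ¬ (yfLT x z ∧ yfLT z y)

end YFWord

/-! Write `u = r ++ c` and `y = s ++ c` with `c` the longest common suffix, so that `u ≤ y` says
`|r| ≤ #₂ s`, where `#₂` counts 2's. The digit sum is strictly monotone, and both moves raise it by exactly one, so the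
moves produce covers. Conversely, given `u < y`, one of the moves applied to `u` stays below `y`:
if `r` contains a `1`, turn its leftmost `1` into a `2`; if `r` consists of `2`'s and `|r| < #₂ s`,
prepend a `1`; and if `|r| = #₂ s`, then `s` must end in `1` (it cannot end in `2` like `r`, by
maximality of `c`), so `y = w ++ 1 :: c` with `#₂ w = |r|` and inserting `1` just before `c` works. -/

namespace YFWord

theorem commonPrefix_prefix_left : ∀ x y : YFWord, commonPrefix x y <+: x
  | [], _ => by simp [commonPrefix]
  | _ :: _, [] => by simp [commonPrefix]
  | a :: x, b :: y => by
      by_cases h : a = b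
      · simpa [commonPrefix, h] using commonPrefix_prefix_left x y
      · simp [commonPrefix, h]

theorem commonPrefix_comm : ∀ x y : YFWord, commonPrefix x y = commonPrefix y x
  | [], [] | [], _ :: _ | _ :: _, [] => rfl
  | a :: x, b :: y => by
      by_cases h : a = b
      · subst h
        simp [commonPrefix, commonPrefix_comm x y]
      · simp [commonPrefix, h, Ne.symm h]

theorem prefix_commonPrefix {p x y : YFWord} (hx : p <+: x) (hy : p <+: y) :
    p <+: commonPrefix x y := by
  induction p generalizing x y with
  | nil => exact List.nil_prefix
  | cons c p ih =>
    cases x with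
    | nil => simp at hx
    | cons a x =>
    cases y with
    | nil => simp at hy
    | cons b y =>
    obtain ⟨rfl, hx'⟩ := List.cons_prefix_cons.mp hx
    obtain ⟨rfl, hy'⟩ := List.cons_prefix_cons.mp hy
    simpa [commonPrefix] using ih hx' hy'

theorem lcs_comm (x y : YFWord) : lcs x y = lcs y x := by
  rw [lcs, lcs, commonPrefix_comm]

theorem lcs_suffix_left (x y : YFWord) : lcs x y <:+ x := by
  rw [← List.reverse_prefix, lcs, List.reverse_reverse]
  exact commonPrefix_prefix_left _ _

theorem suffix_lcs {s x y : YFWord} (hx : s <:+ x) (hy : s <:+ y) : s <:+ lcs x y := by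
  rw [← List.reverse_prefix, lcs, List.reverse_reverse]
  exact prefix_commonPrefix (List.reverse_prefix.mpr hx) (List.reverse_prefix.mpr hy)

theorem rem_append_lcs (x y : YFWord) : rem x y ++ lcs x y = x := by
  have h := List.suffix_iff_eq_drop.mp (lcs_suffix_left x y)
  rw [rem]
  nth_rewrite 2 [h]
  exact List.take_append_drop _ _

theorem rem_swap_append_lcs (x y : YFWord) : rem y x ++ lcs x y = y := by
  rw [lcs_comm]
  exact rem_append_lcs y x

theorem exists_rem_append_of_append (px py c : YFWord) :
    ∃ d, px = rem (px ++ c) (py ++ c) ++ d ∧ py = rem (py ++ c) (px ++ c) ++ d := by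
  obtain ⟨d, hd⟩ := suffix_lcs (List.suffix_append px c) (List.suffix_append py c)
  refine ⟨d, List.append_cancel_right (bs := c) ?_, List.append_cancel_right (bs := c) ?_⟩
  · rw [List.append_assoc, hd, rem_append_lcs]
  · rw [List.append_assoc, hd, rem_swap_append_lcs]

theorem ne_of_rem_eq_append_singleton {x y p q : YFWord} {d e : YFDigit}
    (hx : rem x y = p ++ [d]) (hy : rem y x = q ++ [e]) : d ≠ e := by
  rintro rfl
  have hsx : d :: lcs x y <:+ x := ⟨p, Eq.trans (by simp [hx]) (rem_append_lcs x y)⟩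
  have hsy : d :: lcs x y <:+ y := ⟨q, Eq.trans (by simp [hy]) (rem_swap_append_lcs x y)⟩
  simpa using (suffix_lcs hsx hsy).length_le

theorem count_one_add_twos (v : YFWord) : v.count .one + twos v = v.length := by
  induction v with
  | nil => rfl
  | cons d v ih => cases d <;> simp [twos] at * <;> omega

theorem twos_le_length (v : YFWord) : twos v ≤ v.length := List.count_le_length

theorem twos_eq_length_iff (v : YFWord) : twos v = v.length ↔ v.count .one = 0 := by
  have := count_one_add_twos v
  omega

theorem twos_append (a b : YFWord) : twos (a ++ b) = twos a + twos b := List.count_append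

theorem eq_two_of_mem {v : YFWord} {d : YFDigit} (hv : v.count .one = 0) (hd : d ∈ v) :
    d = .two := by
  cases d
  · exact absurd hd (List.count_eq_zero.mp hv)
  · rfl

theorem eq_replicate_two {v : YFWord} (hv : v.count .one = 0) :
    v = List.replicate v.length .two :=
  List.eq_replicate_iff.mpr ⟨rfl, fun _ => eq_two_of_mem hv⟩

theorem dsum_append (a b : YFWord) : dsum (a ++ b) = dsum a + dsum b := by
  simp [dsum]

theorem dsum_eq_length_add_twos (v : YFWord) : dsum v = v.length + twos v := by
  induction v with
  | nil => rfl
  | cons d v ih => cases d <;> simp [dsum, twos, digitVal] at * <;> omega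

theorem dsum_eq_rem_add_lcs (x y : YFWord) : dsum x = dsum (rem x y) + dsum (lcs x y) := by
  rw [← dsum_append, rem_append_lcs]

theorem yfLE_append_of_length_le_twos {px py c : YFWord} (h : px.length ≤ twos py) :
    yfLE (px ++ c) (py ++ c) := by
  obtain ⟨d, hx, hy⟩ := exists_rem_append_of_append px py c
  have hlen := congrArg List.length hx
  have htwos := congrArg twos hy
  rw [List.length_append] at hlen
  rw [twos_append] at htwos
  have := twos_le_length d
  unfold yfLE
  omega

theorem dsum_le_of_yfLE {x y : YFWord} (h : yfLE x y) : dsum x ≤ dsum y := by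
  rw [dsum_eq_rem_add_lcs x y, dsum_eq_rem_add_lcs y x, lcs_comm y x,
    dsum_eq_length_add_twos (rem x y), dsum_eq_length_add_twos (rem y x)]
  have := twos_le_length (rem x y)
  have := twos_le_length (rem y x)
  unfold yfLE at h
  omega

theorem dsum_lt_of_yfLT {x y : YFWord} (h : yfLT x y) : dsum x < dsum y := by
  rw [dsum_eq_rem_add_lcs x y, dsum_eq_rem_add_lcs y x, lcs_comm y x,
    dsum_eq_length_add_twos (rem x y), dsum_eq_length_add_twos (rem y x)]
  obtain ⟨hle, hnge⟩ := h
  unfold yfLE at hle hnge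
  omega

theorem yfLT_of_yfLE_of_dsum_lt {x y : YFWord} (h : yfLE x y) (hd : dsum x < dsum y) :
    yfLT x y :=
  ⟨h, fun h' => (dsum_le_of_yfLE h').not_gt hd⟩

theorem yfLE_antisymm {x y : YFWord} (hxy : yfLE x y) (hyx : yfLE y x) : x = y := by
  unfold yfLE at hxy hyx
  have := twos_le_length (rem x y)
  have := twos_le_length (rem y x)
  have hr : rem x y = rem y x := by
    rw [eq_replicate_two ((twos_eq_length_iff (rem x y)).mp (by omega)),
      eq_replicate_two ((twos_eq_length_iff (rem y x)).mp (by omega))]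
    congr 1
    omega
  calc x = rem x y ++ lcs x y := (rem_append_lcs x y).symm
    _ = rem y x ++ lcs x y := by rw [hr]
    _ = y := rem_swap_append_lcs x y

def IsCoverMove (u y : YFWord) : Prop :=
  (∃ a b : YFWord, u = a ++ (YFDigit.one :: b) ∧ a.count YFDigit.one = 0 ∧
    y = a ++ (YFDigit.two :: b)) ∨
  (∃ a b : YFWord, u = a ++ b ∧ a.count YFDigit.one = 0 ∧ y = a ++ (YFDigit.one :: b))

theorem yfLE_replace_leftmost_one {a b : YFWord} (ha : a.count .one = 0) :
    yfLE (a ++ .one :: b) (a ++ .two :: b) := by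
  have h := (twos_eq_length_iff a).mpr ha
  rw [List.append_cons a .one, List.append_cons a .two]
  exact yfLE_append_of_length_le_twos (px := a ++ [.one]) (py := a ++ [.two]) (c := b)
    (by rw [twos_append, h]; simp [twos])

theorem yfLE_insert_one {a b : YFWord} (ha : a.count .one = 0) :
    yfLE (a ++ b) (a ++ .one :: b) := by
  have h := (twos_eq_length_iff a).mpr ha
  rw [List.append_cons a .one]
  exact yfLE_append_of_length_le_twos (px := a) (py := a ++ [.one]) (c := b)
    (by rw [twos_append, h]; simp [twos])

theorem IsCoverMove.dsum_eq {u y : YFWord} (h : IsCoverMove u y) : dsum y = dsum u + 1 := by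
  rcases h with ⟨a, b, rfl, -, rfl⟩ | ⟨a, b, rfl, -, rfl⟩ <;>
    simp [dsum, digitVal] <;> omega

theorem IsCoverMove.yfLT {u y : YFWord} (h : IsCoverMove u y) : yfLT u y := by
  refine yfLT_of_yfLE_of_dsum_lt ?_ (by rw [h.dsum_eq]; omega)
  rcases h with ⟨a, b, rfl, ha, rfl⟩ | ⟨a, b, rfl, ha, rfl⟩
  · exact yfLE_replace_leftmost_one ha
  · exact yfLE_insert_one ha

theorem exists_leftmost_one {v : YFWord} (h : v.count .one ≠ 0) :
    ∃ a b : YFWord, v = a ++ .one :: b ∧ a.count .one = 0 := by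
  induction v with
  | nil => simp at h
  | cons d v ih =>
    cases d with
    | one => exact ⟨[], v, rfl, rfl⟩
    | two =>
      obtain ⟨a, b, rfl, ha⟩ := ih (by simpa [List.count_cons] using h)
      exact ⟨.two :: a, b, rfl, by simpa [List.count_cons] using ha⟩

theorem last_rem_eq_one {x y w : YFWord} {d : YFDigit} (hx : (rem x y).count .one = 0)
    (hlen : (rem x y).length = twos (rem y x)) (hy : rem y x = w ++ [d]) : d = .one := by
  cases d with
  | one => rfl
  | two =>
    obtain hnil | ⟨p, e, hp⟩ := List.eq_nil_or_concat' (rem x y)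
    · rw [hnil, hy, twos_append] at hlen
      simp [twos] at hlen
    · have he : e = .two := eq_two_of_mem hx (by simp [hp])
      exact absurd he (ne_of_rem_eq_append_singleton hp hy)

theorem exists_isCoverMove_yfLE {u y : YFWord} (h : yfLT u y) :
    ∃ y', IsCoverMove u y' ∧ yfLE y' y := by
  obtain ⟨hle, hnge⟩ := h
  unfold yfLE at hle hnge
  have hu := rem_append_lcs u y
  have hy := rem_swap_append_lcs u y
  by_cases hr : (rem u y).count .one = 0
  · rcases hle.lt_or_eq with hlt | heq
    · refine ⟨.one :: u, Or.inr ⟨[], u, rfl, rfl, rfl⟩, ?_⟩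
      have key := yfLE_append_of_length_le_twos (px := .one :: rem u y) (c := lcs u y)
        (by simpa using hlt)
      rwa [List.cons_append, hu, hy] at key
    · obtain hnil | ⟨w, d, hw⟩ := List.eq_nil_or_concat' (rem y u)
      · simp [hnil] at hnge
      obtain rfl := last_rem_eq_one hr heq hw
      refine ⟨rem u y ++ .one :: lcs u y, Or.inr ⟨rem u y, lcs u y, hu.symm, hr, rfl⟩, ?_⟩
      have key := yfLE_append_of_length_le_twos (px := rem u y) (py := w) (c := .one :: lcs u y)
        (by rw [heq, hw, twos_append]; simp [twos])
      have hy' : w ++ .one :: lcs u y = y := (by simp [hw] : _ = rem y u ++ lcs u y).trans hy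
      rwa [hy'] at key
  · obtain ⟨a, b, hab, ha⟩ := exists_leftmost_one hr
    have hu' : u = a ++ .one :: (b ++ lcs u y) := hu.symm.trans (by simp [hab])
    refine ⟨a ++ .two :: (b ++ lcs u y), Or.inl ⟨a, b ++ lcs u y, hu', ha, rfl⟩, ?_⟩
    have key := yfLE_append_of_length_le_twos (px := a ++ .two :: b) (py := rem y u)
      (c := lcs u y) (by simpa [hab] using hle)
    rwa [hy, List.append_assoc, List.cons_append] at key

end YFWord

open YFWord

theorem yf_covers_iff (u y : YFWord) :
    covers u y ↔
      (∃ a b : YFWord, u = a ++ (YFDigit.one :: b) ∧ a.count YFDigit.one = 0 ∧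
        y = a ++ (YFDigit.two :: b)) ∨
      (∃ a b : YFWord, u = a ++ b ∧ a.count YFDigit.one = 0 ∧
        y = a ++ (YFDigit.one :: b)) := by
  change covers u y ↔ IsCoverMove u y
  constructor
  · rintro ⟨hlt, hmin⟩
    obtain ⟨y', hmove, hle⟩ := exists_isCoverMove_yfLE hlt
    obtain rfl | hne := eq_or_ne y' y
    · exact hmove
    · exact absurd ⟨hmove.yfLT, hle, fun hge => hne (yfLE_antisymm hle hge)⟩ (hmin y')
  · intro hmove
    refine ⟨hmove.yfLT, fun z ⟨huz, hzy⟩ => ?_⟩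
    have := dsum_lt_of_yfLT huz
    have := dsum_lt_of_yfLT hzy
    have := hmove.dsum_eq
    omega
end

section
/- The map a on words over {1,2} that swaps a trailing '11' with a trailing '2' (that is, a(v11) = v2 and a(v2) = v11), fixes words ending in '21' (a(v21) = v21), and fixes the words 1 and ε, is an order-automorphism of the Young–Fibonacci poset. -/
open YFWord

namespace YFWord

/-- the automorphism `a`, acting on the reversed word: a trailing `11` becomes `2`,
a trailing `2` becomes `11`, words ending in `21`, the word `1` and `ε` are fixed -/
def aRev : YFWord → YFWord
  | [] => []
  | [YFDigit.one] => [YFDigit.one]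
  | YFDigit.one :: YFDigit.one :: r => YFDigit.two :: r
  | YFDigit.one :: YFDigit.two :: r => YFDigit.one :: YFDigit.two :: r
  | YFDigit.two :: r => YFDigit.one :: YFDigit.one :: r

/-- the automorphism `a` of the Young–Fibonacci poset -/
def autA (v : YFWord) : YFWord := (aRev v.reverse).reverse

end YFWord

namespace YFWord

/- auxiliary lemmas -/

theorem cp_nil_left (v : YFWord) : commonPrefix [] v = [] := by
  cases v <;> rfl

theorem cp_nil_right (u : YFWord) : commonPrefix u [] = [] := by
  cases u <;> rfl

theorem cp_cons_eq (d : YFDigit) (u v : YFWord) :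
    commonPrefix (d :: u) (d :: v) = d :: commonPrefix u v := by
  simp [commonPrefix]

theorem cp_cons_ne {d e : YFDigit} (h : d ≠ e) (u v : YFWord) :
    commonPrefix (d :: u) (e :: v) = [] := by
  simp [commonPrefix, h]

theorem cp_symm (u v : YFWord) : commonPrefix u v = commonPrefix v u := by
  induction u generalizing v with
  | nil => simp [cp_nil_left, cp_nil_right]
  | cons d u ih =>
    cases v with
    | nil => simp [cp_nil_left, cp_nil_right]
    | cons e v =>
      by_cases h : d = e
      · subst h; rw [cp_cons_eq, cp_cons_eq, ih]
      · rw [cp_cons_ne h, cp_cons_ne (Ne.symm h)]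

theorem cp_length_le (u v : YFWord) : (commonPrefix u v).length ≤ u.length := by
  induction u generalizing v with
  | nil => simp [cp_nil_left]
  | cons d u ih =>
    cases v with
    | nil => simp [cp_nil_right]
    | cons e v =>
      by_cases h : d = e
      · subst h; rw [cp_cons_eq]; simpa using ih v
      · rw [cp_cons_ne h]; simp

def le' (u v : YFWord) : Prop :=
  (u.drop (commonPrefix u v).length).length ≤ twos (v.drop (commonPrefix u v).length)

@[simp] theorem twos_nil : twos ([] : YFWord) = 0 := rfl
@[simp] theorem twos_one_cons (v : YFWord) : twos (YFDigit.one :: v) = twos v := by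
  simp [twos]
@[simp] theorem twos_two_cons (v : YFWord) : twos (YFDigit.two :: v) = twos v + 1 := by
  simp [twos]

theorem le'_cons (d : YFDigit) (u v : YFWord) : le' (d :: u) (d :: v) ↔ le' u v := by
  simp [le', cp_cons_eq]

theorem le'_nil_left (v : YFWord) : le' [] v := by
  simp [le', cp_nil_left]

theorem le'_nil_right (u : YFWord) : le' u [] ↔ u = [] := by
  simp [le', cp_nil_right, twos, List.length_eq_zero_iff]

theorem le'_one_two (u v : YFWord) :
    le' (YFDigit.one :: u) (YFDigit.two :: v) ↔ u.length ≤ twos v := by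
  have h : (YFDigit.one : YFDigit) ≠ YFDigit.two := by simp
  simp [le', cp_cons_ne h]

theorem le'_two_one (u v : YFWord) :
    le' (YFDigit.two :: u) (YFDigit.one :: v) ↔ u.length + 1 ≤ twos v := by
  have h : (YFDigit.two : YFDigit) ≠ YFDigit.one := by simp
  simp [le', cp_cons_ne h]

theorem le'_aRev (u v : YFWord) : le' u v ↔ le' (aRev u) (aRev v) := by
  rcases u with _ | ⟨(_|_), (_ | ⟨(_|_), r⟩)⟩ <;>
    rcases v with _ | ⟨(_|_), (_ | ⟨(_|_), s⟩)⟩ <;>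
    simp [aRev, le'_cons, le'_nil_left, le'_nil_right, le'_one_two, le'_two_one]

theorem aRev_aRev (u : YFWord) : aRev (aRev u) = u := by
  rcases u with _ | ⟨(_|_), (_ | ⟨(_|_), r⟩)⟩ <;> rfl

theorem autA_autA (x : YFWord) : autA (autA x) = x := by
  simp [autA, aRev_aRev]

theorem yfLE_iff_le' (x y : YFWord) : yfLE x y ↔ le' x.reverse y.reverse := by
  unfold yfLE le' rem lcs
  rw [cp_symm y.reverse x.reverse]
  simp only [List.length_reverse]
  set k := (commonPrefix x.reverse y.reverse).length with hk
  have hkx : k ≤ x.length := by simpa using cp_length_le x.reverse y.reverse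
  have hky : k ≤ y.length := by
    have := cp_length_le x.reverse y.reverse
    rw [cp_symm] at this
    have h2 := cp_length_le y.reverse x.reverse
    rw [cp_symm y.reverse x.reverse] at h2
    simpa using h2
  have h1 : (x.take (x.length - k)).length = (x.reverse.drop k).length := by
    simp [List.length_take]
  have h2 : twos (y.take (y.length - k)) = twos (y.reverse.drop k) := by
    have hrev : y.reverse.drop k = (y.take (y.length - k)).reverse := by
      rw [List.reverse_take]
      congr 1
      omega
    rw [hrev, twos, twos, List.count_reverse]
  rw [h1, h2]

end YFWord

theorem yf_autA_order_automorphism :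
    Function.Bijective autA ∧ ∀ x y : YFWord, yfLE x y ↔ yfLE (autA x) (autA y) := by
  constructor
  · exact Function.Involutive.bijective autA_autA
  · intro x y
    rw [yfLE_iff_le' x y, yfLE_iff_le' (autA x) (autA y)]
    have hx : (autA x).reverse = aRev x.reverse := by simp [autA]
    have hy : (autA y).reverse = aRev y.reverse := by simp [autA]
    rw [hx, hy]
    exact le'_aRev x.reverse y.reverse
end
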